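/- For every fixed integer m ≥ 1, as n → ∞ one has φ³_{n,m} ~ C³_m · (256/27)^n · n^{-5/2}, i.e. lim_{n→∞} φ³_{n,m} · (27/256)^n · n^{5/2} = C³_m, where C³_m = ((2m+1)! / (3√(6π) · (m−1)! · (m+1)!)) · (16/9)^m. -/

import Mathlib

/-- The number of rooted type III triangulations of a disc with m+2 boundary
vertices and n internal vertices (for m ≥ 1). -/
noncomputable def phi3 (n m : ℕ) : ℝ :=
  (2 * Nat.factorial (2 * m + 1) * Nat.factorial (4 * n + 2 * m - 1) : ℝ) /
    (Nat.factorial (m - 1) * Nat.factorial (m + 1) * Nat.factorial n *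
      Nat.factorial (3 * n + 2 * m + 1))

/-- The constant C³_m. -/
noncomputable def C3 (m : ℕ) : ℝ :=
  (Nat.factorial (2 * m + 1) : ℝ) /
    (3 * Real.sqrt (6 * Real.pi) * Nat.factorial (m - 1) * Nat.factorial (m + 1)) *
    (16 / 9) ^ m

open Filter Real Topology Asymptotics Nat

/-! Since `(k + d)! ~ k! k^d` for fixed `d`, and Stirling's formula gives
`(4n)! / (n! (3n)!) ~ √(2 / (3πn)) (256/27)^n`, the number `φ³_{n,m}`, a constant multiple of
`(4n + 2m - 1)! / (n! (3n + 2m + 1)!)`, is asymptotic to a constant times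
`(256/27)^n n^(-1/2) (4n)^(2m-1) / (3n)^(2m+1)`; the two powers of `n` combine to `n^(-5/2)`. -/

lemma isEquivalent_factorial_add (d : ℕ) :
    (fun k : ℕ => ((k + d)! : ℝ)) ~[atTop] fun k => (k ! : ℝ) * k ^ d := by
  induction d with
  | zero => simpa only [add_zero, pow_zero, mul_one] using IsEquivalent.refl
  | succ d ih =>
    have hlin : (fun k : ℕ => ((k + d + 1 : ℕ) : ℝ)) ~[atTop] fun k => (k : ℝ) := by
      refine (isEquivalent_of_tendsto_one ?_).symm
      simpa only [add_assoc, cast_add, cast_one, Pi.div_def] using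
        tendsto_natCast_div_add_atTop ((d : ℝ) + 1)
    convert hlin.mul ih using 1 <;> funext k
    · simp only [← add_assoc, factorial_succ, cast_mul, cast_add, cast_one, Pi.mul_apply]
    · simp only [Pi.mul_apply]
      ring

lemma isEquivalent_factorial_mul_add (c d : ℕ) (hc : 0 < c) :
    (fun n : ℕ => ((c * n + d)! : ℝ)) ~[atTop] fun n => ((c * n)! : ℝ) * (c * n : ℝ) ^ d :=
  ((isEquivalent_factorial_add d).comp_tendsto (tendsto_id.const_mul_atTop' hc)).congr_right
    (.of_forall fun n => by simp)

lemma isEquivalent_factorial_mul_stirling (c : ℕ) (hc : 0 < c) :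
    (fun n : ℕ => ((c * n)! : ℝ)) ~[atTop]
      fun n => √(2 * (c * n) * π) * (c * n / exp 1) ^ (c * n) :=
  (Stirling.factorial_isEquivalent_stirling.comp_tendsto
    (tendsto_id.const_mul_atTop' hc)).congr_right
    (.of_forall fun n => by simp only [Function.comp_apply, id, cast_mul])

lemma isEquivalent_factorial_add_mul_div (a b : ℕ) (ha : 0 < a) (hb : 0 < b) :
    (fun n : ℕ => (((a + b) * n)! : ℝ) / ((a * n)! * (b * n)!)) ~[atTop]
      fun n => √((a + b) / (2 * π * a * b * n)) * ((a + b : ℝ) ^ (a + b) / (a ^ a * b ^ b)) ^ n := by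
  refine ((isEquivalent_factorial_mul_stirling (a + b) (by omega)).div
    ((isEquivalent_factorial_mul_stirling a ha).mul
      (isEquivalent_factorial_mul_stirling b hb))).congr_right ?_
  filter_upwards [eventually_gt_atTop 0] with n hn
  have hn' : (0 : ℝ) < n := by exact_mod_cast hn
  have ha' : (0 : ℝ) < a := by exact_mod_cast ha
  have hb' : (0 : ℝ) < b := by exact_mod_cast hb
  have hsqrt : √(2 * ((a + b : ℕ) * n) * π) =
      √((a + b) / (2 * π * a * b * n)) * (√(2 * (a * n) * π) * √(2 * (b * n) * π)) := by
    rw [← sqrt_mul (by positivity), ← sqrt_mul (by positivity)]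
    congr 1
    field_simp
    push_cast
    ring
  simp only [Pi.div_apply, Pi.mul_apply, hsqrt, div_pow, mul_pow, ← pow_mul]
  push_cast
  field_simp
  ring

lemma isEquivalent_factorial_four_mul_add_div (a b : ℕ) :
    (fun n : ℕ => ((4 * n + a)! : ℝ) / (n ! * (3 * n + b)!)) ~[atTop]
      fun n => √(2 / (3 * π * n)) * (256 / 27) ^ n * ((4 * n) ^ a / (3 * n) ^ b) := by
  have hshift := (isEquivalent_factorial_mul_add 4 a (by norm_num)).div
    ((IsEquivalent.refl (u := fun n : ℕ => (n ! : ℝ))).mul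
      (isEquivalent_factorial_mul_add 3 b (by norm_num)))
  have hstirling := isEquivalent_factorial_add_mul_div 1 3 one_pos three_pos
  refine hshift.trans (((hstirling.mul (IsEquivalent.refl
    (u := fun n : ℕ => (4 * n : ℝ) ^ a / (3 * n) ^ b))).congr_left
    (.of_forall fun n => ?_)).congr_right (.of_forall fun n => ?_)) <;>
  · simp only [Pi.mul_apply, Pi.div_apply]
    push_cast
    ring_nf

lemma phi3_succ (n p : ℕ) :
    phi3 n (p + 1) = 2 * (2 * p + 3)! / (p ! * (p + 2)!) *
      ((4 * n + (2 * p + 1))! / (n ! * (3 * n + (2 * p + 3))!)) := by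
  simp only [phi3, show 4 * n + 2 * (p + 1) - 1 = 4 * n + (2 * p + 1) by omega,
    show 3 * n + 2 * (p + 1) + 1 = 3 * n + (2 * p + 3) by ring,
    show 2 * (p + 1) + 1 = 2 * p + 3 by ring, Nat.add_sub_cancel]
  ring

lemma isEquivalent_phi3 {m : ℕ} (hm : 1 ≤ m) :
    (fun n => phi3 n m) ~[atTop] fun n => C3 m * (256 / 27) ^ n / (n : ℝ) ^ ((5 : ℝ) / 2) := by
  obtain ⟨p, rfl⟩ : ∃ p, m = p + 1 := ⟨m - 1, by omega⟩
  simp only [phi3_succ]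
  refine (IsEquivalent.refl.mul (isEquivalent_factorial_four_mul_add_div _ _)).congr_right ?_
  filter_upwards [eventually_gt_atTop 0] with n hn
  have hn' : (0 : ℝ) < n := by exact_mod_cast hn
  have hpow : (n : ℝ) ^ ((5 : ℝ) / 2) = n ^ 2 * √n := by
    rw [sqrt_eq_rpow, ← rpow_natCast, ← rpow_add hn']
    norm_num
  have hsqrt : √(2 / (3 * π * n)) = √2 / (√3 * √π * √n) := by
    rw [sqrt_div' _ (by positivity), sqrt_mul (by positivity), sqrt_mul (by positivity)]
  have h6π : √(6 * π) = √2 * √3 * √π := by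
    rw [← sqrt_mul (by norm_num), ← sqrt_mul (by norm_num)]; norm_num
  have h169 : (16 / 9 : ℝ) ^ (p + 1) = (4 / 3) ^ (2 * (p + 1)) := by
    rw [pow_mul]; norm_num
  simp only [Pi.mul_apply, C3, hpow, hsqrt, h6π, h169, show 2 * (p + 1) + 1 = 2 * p + 3 by ring,
    Nat.add_sub_cancel, div_pow, mul_pow]
  field_simp
  rw [sq_sqrt zero_le_two]
  ring

/-- φ³_{n,m} ~ C³_m · (256/27)^n · n^{-5/2} as n → ∞, for fixed m ≥ 1. -/
theorem phi3_asymptotics (m : ℕ) (hm : 1 ≤ m) :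
    Filter.Tendsto
      (fun n : ℕ => phi3 n m * (27 / 256 : ℝ) ^ n * (n : ℝ) ^ ((5 : ℝ) / 2))
      Filter.atTop (nhds (C3 m)) := by
  refine (((isEquivalent_phi3 hm).mul (IsEquivalent.refl
    (u := fun n : ℕ => (27 / 256 : ℝ) ^ n * (n : ℝ) ^ ((5 : ℝ) / 2)))).symm.tendsto_nhds ?_).congr
    fun n => by simp only [Pi.mul_apply]; ring
  refine tendsto_const_nhds.congr' ?_
  filter_upwards [eventually_gt_atTop 0] with n hn
  simp only [Pi.mul_apply]
  field_simp
  rw [mul_assoc, ← mul_pow]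
  norm_num
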